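/- Assume the stepsizes are uniform, τ_v = τ for all v ∈ V, with τ < ‖A_v‖₂⁻² for every v ∈ V. Then for every X ∈ ℝ^{n×|V|}, F(X) − F(ΓX) ≥ (q/τ) Σ_{v∈V} ((ΓX)_v − x_v)ᵀ (I − τ A_vᵀA_v) ((ΓX)_v − x_v), and the right-hand side is nonnegative since each matrix I − τ A_vᵀA_v is positive definite. -/

import Mathlib

open Finset Filter Matrix

/-- Euclidean norm on `ℝ^k`. -/
noncomputable def enorm2 {k : ℕ} (x : Fin k → ℝ) : ℝ := Real.sqrt (∑ i, (x i) ^ 2)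

/-- ℓ¹ norm on `ℝ^k`. -/
noncomputable def onenorm {k : ℕ} (x : Fin k → ℝ) : ℝ := ∑ i, |x i|

/-- Operator norm of a matrix induced by Euclidean norms. -/
noncomputable def opNorm {m n : ℕ} (A : Matrix (Fin m) (Fin n) ℝ) : ℝ :=
  sSup {c : ℝ | ∃ z : Fin n → ℝ, z ≠ 0 ∧ c = enorm2 (A.mulVec z) / enorm2 z}

/-- Soft thresholding operator `η_α`, acting componentwise. -/
noncomputable def eta {k : ℕ} (α : ℝ) (x : Fin k → ℝ) : Fin k → ℝ :=
  fun i => if α < |x i| then Real.sign (x i) * (|x i| - α) else 0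

/-- The uniform-weights stochastic matrix adapted to the graph `E`
(`d` is the common degree). -/
noncomputable def Pmat {V : Type*} (E : V → V → Prop) [DecidableRel E] (d : ℕ) :
    V → V → ℝ := fun u w => if E u w then 1 / (d : ℝ) else 0

/-- Column `v` of `X Pᵀ`, i.e. the `P`-weighted average `∑ w P_{v,w} x_w`. -/
noncomputable def avg {n : ℕ} {V : Type*} [Fintype V] (P : V → V → ℝ)
    (X : V → Fin n → ℝ) : V → Fin n → ℝ := fun v i => ∑ w, P v w * X w i

/-- Frobenius norm of `X ∈ ℝ^{n×|V|}` (columns indexed by `V`). -/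
noncomputable def frobNorm {n : ℕ} {V : Type*} [Fintype V] (X : V → Fin n → ℝ) : ℝ :=
  Real.sqrt (∑ v, ∑ i, (X v i) ^ 2)

/-- The distributed Lasso functional `F`. -/
noncomputable def Flasso {n m : ℕ} {V : Type*} [Fintype V] (P : V → V → ℝ)
    (A : V → Matrix (Fin m) (Fin n) ℝ) (y : V → Fin m → ℝ)
    (q α : ℝ) (τ : V → ℝ) (X : V → Fin n → ℝ) : ℝ :=
  ∑ v, (q * enorm2 (y v - (A v).mulVec (X v)) ^ 2 + (2 * α / τ v) * onenorm (X v)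
    + ((1 - q) / τ v) * ∑ w, P v w * enorm2 (avg P X w - X v) ^ 2)

/-- The DISTA operator `Γ`, defined columnwise. -/
noncomputable def Gamma {n m : ℕ} {V : Type*} [Fintype V] (P : V → V → ℝ)
    (A : V → Matrix (Fin m) (Fin n) ℝ) (y : V → Fin m → ℝ)
    (q α : ℝ) (τ : V → ℝ) (X : V → Fin n → ℝ) : V → Fin n → ℝ :=
  fun v => eta α (fun i =>
    (1 - q) * avg P (avg P X) v i
      + q * (X v i + τ v * ((A v)ᵀ.mulVec (y v - (A v).mulVec (X v)) i)))

/-- The surrogate functional `F^S`. -/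
noncomputable def FS {n m : ℕ} {V : Type*} [Fintype V] (E : V → V → Prop) [DecidableRel E]
    (d : ℕ) (A : V → Matrix (Fin m) (Fin n) ℝ) (y : V → Fin m → ℝ)
    (q α : ℝ) (τ : V → ℝ) (X C B : V → Fin n → ℝ) : ℝ :=
  ∑ v, (q * enorm2 ((A v).mulVec (X v) - y v) ^ 2 + (2 * α / τ v) * onenorm (X v)
    + ((1 - q) / ((d : ℝ) * τ v)) *
        ∑ w ∈ Finset.univ.filter (fun w => E v w), enorm2 (X v - C w) ^ 2
    + (q / τ v) * enorm2 (X v - B v) ^ 2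
    - q * enorm2 ((A v).mulVec (X v - B v)) ^ 2)

/-!
DISTA is a majorization–minimization step. Fix `X` and let `F^S(T) = F^S(T; X̄, X)` be the
surrogate. Column by column, `τ F^S` is the proximal objective `‖t - c_v‖² + 2α‖t‖₁` plus a
constant, where `c_v` is the point that `Γ` soft-thresholds; hence `ΓX` minimizes `F^S`, and
`F^S(X) = F(X)`. On the other side, `F^S(T)` exceeds
`F(T) + (q/τ) ∑_v (t_v - x_v)ᵀ (I - τ A_vᵀA_v) (t_v - x_v)` by `(1-q)/τ` times the change of the
consensus term when the averages `T̄` are replaced by `X̄`, which is nonnegative because, for a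
symmetric stochastic `P`, the average `t̄_w` minimizes `z ↦ ∑_v P_{wv} ‖z - t_v‖²`.
Positive definiteness of `I - τ A_vᵀA_v` is `τ ‖A_v u‖² ≤ τ ‖A_v‖₂² ‖u‖² < ‖u‖²`.
-/

lemma enorm2_sq {k : ℕ} (u : Fin k → ℝ) : enorm2 u ^ 2 = u ⬝ᵥ u := by
  rw [enorm2, Real.sq_sqrt (by positivity)]
  simp only [dotProduct, sq]

lemma dotProduct_self_sub_comm {k : ℕ} (u w : Fin k → ℝ) :
    (u - w) ⬝ᵥ (u - w) = (w - u) ⬝ᵥ (w - u) := by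
  rw [← neg_sub w u, neg_dotProduct, dotProduct_neg, neg_neg]

lemma dotProduct_self_sub_sub_dotProduct_self_sub {k : ℕ} (t s z : Fin k → ℝ) :
    (t - z) ⬝ᵥ (t - z) - (s - z) ⬝ᵥ (s - z) = t ⬝ᵥ t - s ⬝ᵥ s - 2 * ((t - s) ⬝ᵥ z) := by
  simp only [sub_dotProduct, dotProduct_sub, dotProduct_comm z]
  ring

lemma dotProduct_one_sub_smul_transpose_mul_self_mulVec {m n : ℕ}
    (A : Matrix (Fin m) (Fin n) ℝ) (τ : ℝ) (u : Fin n → ℝ) :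
    u ⬝ᵥ ((1 - τ • (Aᵀ * A)) *ᵥ u) = u ⬝ᵥ u - τ * ((A *ᵥ u) ⬝ᵥ (A *ᵥ u)) := by
  rw [sub_mulVec, one_mulVec, dotProduct_sub, smul_mulVec, dotProduct_smul, smul_eq_mul,
    ← mulVec_mulVec, dotProduct_mulVec, vecMul_transpose]

lemma enorm2_mulVec_le {m n : ℕ} (A : Matrix (Fin m) (Fin n) ℝ) (u : Fin n → ℝ) :
    enorm2 (A *ᵥ u) ≤ Real.sqrt (∑ i, ∑ j, A i j ^ 2) * enorm2 u := by
  rw [enorm2, enorm2, ← Real.sqrt_mul (by positivity), sum_mul]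
  gcongr with i
  simpa [mulVec, dotProduct] using sum_mul_sq_le_sq_mul_sq univ (A i) u

lemma enorm2_pos {k : ℕ} {u : Fin k → ℝ} (hu : u ≠ 0) : 0 < enorm2 u := by
  refine (Real.sqrt_nonneg _).lt_of_ne' fun h => hu ?_
  rw [← dotProduct_self_eq_zero, ← enorm2_sq, enorm2, h, sq, zero_mul]

lemma enorm2_mulVec_le_opNorm {m n : ℕ} (A : Matrix (Fin m) (Fin n) ℝ) (u : Fin n → ℝ) :
    enorm2 (A *ᵥ u) ≤ opNorm A * enorm2 u := by
  rcases eq_or_ne u 0 with rfl | hu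
  · simp [enorm2]
  have hbdd : BddAbove {c : ℝ | ∃ z : Fin n → ℝ, z ≠ 0 ∧ c = enorm2 (A *ᵥ z) / enorm2 z} := by
    refine ⟨Real.sqrt (∑ i, ∑ j, A i j ^ 2), ?_⟩
    rintro _ ⟨z, hz, rfl⟩
    exact (div_le_iff₀ (enorm2_pos hz)).mpr (enorm2_mulVec_le A z)
  exact (div_le_iff₀ (enorm2_pos hu)).mp (le_csSup hbdd ⟨u, hu, rfl⟩)

lemma posDef_one_sub_smul_transpose_mul_self {m n : ℕ} (A : Matrix (Fin m) (Fin n) ℝ) {τ : ℝ}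
    (hτ₀ : 0 < τ) (hτ : τ < (opNorm A ^ 2)⁻¹) : (1 - τ • (Aᵀ * A)).PosDef := by
  have hN : 0 < opNorm A ^ 2 := by
    by_contra! h
    exact (hτ₀.trans hτ).not_ge (inv_nonpos.mpr h)
  have hτN : τ * opNorm A ^ 2 < 1 := (lt_div_iff₀ hN).mp (by rwa [one_div])
  refine .of_dotProduct_mulVec_pos ?_ fun u hu => ?_
  · have hAA : (Aᵀ * A).IsHermitian := by
      simpa using isHermitian_conjTranspose_mul_self A
    exact isHermitian_one.sub (hAA.smul rfl)
  · have hAu : (A *ᵥ u) ⬝ᵥ (A *ᵥ u) ≤ opNorm A ^ 2 * (u ⬝ᵥ u) := by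
      rw [← enorm2_sq, ← enorm2_sq, ← mul_pow]
      exact pow_le_pow_left₀ (Real.sqrt_nonneg _) (enorm2_mulVec_le_opNorm A u) 2
    have huu : 0 < u ⬝ᵥ u := by rw [← enorm2_sq]; exact pow_pos (enorm2_pos hu) 2
    rw [star_trivial, dotProduct_one_sub_smul_transpose_mul_self_mulVec]
    nlinarith

lemma isMinOn_eta {k : ℕ} {α : ℝ} (hα : 0 ≤ α) (c : Fin k → ℝ) :
    IsMinOn (fun x => (x - c) ⬝ᵥ (x - c) + 2 * α * onenorm x) Set.univ (eta α c) := by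
  refine isMinOn_univ_iff.mpr fun x => ?_
  simp only [dotProduct, onenorm, mul_sum, ← sum_add_distrib, Pi.sub_apply]
  refine sum_le_sum fun i _ => ?_
  simp only [eta]
  split_ifs with h
  · rcases lt_trichotomy (c i) 0 with hc | hc | hc
    · rw [Real.sign_of_neg hc, abs_of_neg hc] at *
      rw [abs_of_neg (by linarith)]
      nlinarith [sq_nonneg (x i - c i - α), mul_le_mul_of_nonneg_left (neg_le_abs (x i)) hα]
    · rw [hc, abs_zero] at h
      linarith
    · rw [Real.sign_of_pos hc, abs_of_pos hc] at *
      rw [abs_of_pos (by linarith)]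
      nlinarith [sq_nonneg (x i - c i + α), mul_le_mul_of_nonneg_left (le_abs_self (x i)) hα]
  · have hxc : x i * c i ≤ |x i| * α := by
      refine (le_abs_self _).trans ?_
      rw [abs_mul]
      exact mul_le_mul_of_nonneg_left (not_lt.mp h) (abs_nonneg _)
    simp only [zero_sub, abs_zero, mul_zero, add_zero]
    nlinarith [mul_self_nonneg (x i)]

section Averaging

variable {n : ℕ} {V : Type*} [Fintype V] (P : V → V → ℝ)

lemma dotProduct_avg (X : V → Fin n → ℝ) (v : V) (z : Fin n → ℝ) :
    z ⬝ᵥ avg P X v = ∑ w, P v w * (z ⬝ᵥ X w) := by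
  simp only [dotProduct, avg, mul_sum]
  rw [sum_comm]
  exact sum_congr rfl fun w _ => sum_congr rfl fun i _ => by ring

lemma sum_mul_sq_dist_sub_sum_mul_sq_dist {v : V} (hv : ∑ w, P v w = 1)
    (C : V → Fin n → ℝ) (t s : Fin n → ℝ) :
    ∑ w, P v w * ((C w - t) ⬝ᵥ (C w - t)) - ∑ w, P v w * ((C w - s) ⬝ᵥ (C w - s))
      = t ⬝ᵥ t - s ⬝ᵥ s - 2 * ((t - s) ⬝ᵥ avg P C v) := by
  rw [← sum_sub_distrib]
  calc ∑ w, (P v w * ((C w - t) ⬝ᵥ (C w - t)) - P v w * ((C w - s) ⬝ᵥ (C w - s)))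
      = ∑ w, P v w * (t ⬝ᵥ t - s ⬝ᵥ s - 2 * ((t - s) ⬝ᵥ C w)) :=
        sum_congr rfl fun w _ => by
          rw [← mul_sub, dotProduct_self_sub_comm (C w), dotProduct_self_sub_comm (C w),
            dotProduct_self_sub_sub_dotProduct_self_sub]
    _ = t ⬝ᵥ t - s ⬝ᵥ s - 2 * ((t - s) ⬝ᵥ avg P C v) := by
        simp only [dotProduct_avg, mul_sub, sum_sub_distrib, ← sum_mul, hv, one_mul, mul_sum]
        simp only [mul_left_comm]

/-- `avg P T w` minimizes `z ↦ ∑ v, P w v * ‖z - T v‖²`. -/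
lemma sum_sum_mul_sq_dist_avg_le (hsymm : ∀ v w, P v w = P w v) (hrow : ∀ v, ∑ w, P v w = 1)
    (Z T : V → Fin n → ℝ) :
    ∑ v, ∑ w, P v w * ((avg P T w - T v) ⬝ᵥ (avg P T w - T v))
      ≤ ∑ v, ∑ w, P v w * ((Z w - T v) ⬝ᵥ (Z w - T v)) := by
  have hswap : ∀ Y : V → Fin n → ℝ, ∑ v, ∑ w, P v w * ((Y w - T v) ⬝ᵥ (Y w - T v))
      = ∑ w, ∑ v, P w v * ((T v - Y w) ⬝ᵥ (T v - Y w)) := fun Y => by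
    rw [sum_comm]
    exact sum_congr rfl fun w _ => sum_congr rfl fun v _ => by
      rw [hsymm, dotProduct_self_sub_comm]
  rw [hswap, hswap]
  refine sum_le_sum fun w _ => ?_
  have hdiff := sum_mul_sq_dist_sub_sum_mul_sq_dist P (hrow w) T (Z w) (avg P T w)
  have hsq := dotProduct_self_sub_sub_dotProduct_self_sub (Z w) (avg P T w) (avg P T w)
  rw [sub_self, zero_dotProduct, sub_zero] at hsq
  have hnonneg : 0 ≤ (Z w - avg P T w) ⬝ᵥ (Z w - avg P T w) := by
    rw [← enorm2_sq]; positivity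
  linarith

end Averaging

section Graph

variable {V : Type*} (E : V → V → Prop) [DecidableRel E] (d : ℕ)

lemma Pmat_comm (hsymm : ∀ u v, E u v → E v u) (u w : V) : Pmat E d u w = Pmat E d w u := by
  simp only [Pmat, (show E u w ↔ E w u from ⟨hsymm u w, hsymm w u⟩)]

lemma sum_Pmat [Fintype V] (hself : ∀ v, E v v)
    (hreg : ∀ v, (Finset.univ.filter (fun w => E v w)).card = d) (v : V) :
    ∑ w, Pmat E d v w = 1 := by
  have hd : (d : ℝ) ≠ 0 := by
    rw [← hreg v]
    exact_mod_cast (card_pos.mpr ⟨v, by simp [hself v]⟩).ne'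
  simp only [Pmat]
  rw [← sum_filter, sum_const, hreg v, nsmul_eq_mul, mul_one_div_cancel hd]

end Graph

section Surrogate

variable {n m : ℕ} {V : Type*} [Fintype V] (P : V → V → ℝ) (A : V → Matrix (Fin m) (Fin n) ℝ)
  (y : V → Fin m → ℝ) (q α : ℝ)

/-- Column `v` of the surrogate functional `F^S(·; C, B)`, with the neighbourhood average
`(1/d) ∑_{w ∈ N_v}` written as `∑ w, P v w`. -/
noncomputable def surrogateCol (τ : V → ℝ) (C B : V → Fin n → ℝ) (v : V) (t : Fin n → ℝ) : ℝ :=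
  q * ((y v - A v *ᵥ t) ⬝ᵥ (y v - A v *ᵥ t)) + 2 * α / τ v * onenorm t
    + (1 - q) / τ v * ∑ w, P v w * ((C w - t) ⬝ᵥ (C w - t))
    + q / τ v * ((t - B v) ⬝ᵥ ((1 - τ v • ((A v)ᵀ * A v)) *ᵥ (t - B v)))

noncomputable def distaCenter (τ : V → ℝ) (C B : V → Fin n → ℝ) (v : V) : Fin n → ℝ :=
  (1 - q) • avg P C v + q • (B v + τ v • ((A v)ᵀ *ᵥ (y v - A v *ᵥ B v)))

lemma Gamma_apply_eq_eta_distaCenter (τ : V → ℝ) (X : V → Fin n → ℝ) (v : V) :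
    Gamma P A y q α τ X v = eta α (distaCenter P A y q τ (avg P X) X v) :=
  rfl

lemma Flasso_eq_sum_surrogateCol (τ : V → ℝ) (X : V → Fin n → ℝ) :
    Flasso P A y q α τ X = ∑ v, surrogateCol P A y q α τ (avg P X) X v (X v) := by
  simp [Flasso, surrogateCol, enorm2_sq]

/-- Up to the factor `τ v` and an additive constant, the surrogate column is the proximal
objective of `2α‖·‖₁` centred at the DISTA point. -/
lemma mul_surrogateCol_sub_surrogateCol {τ : V → ℝ} {v : V} (hv : ∑ w, P v w = 1)
    (hτ : τ v ≠ 0) (C B : V → Fin n → ℝ) (t s : Fin n → ℝ) :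
    τ v * (surrogateCol P A y q α τ C B v t - surrogateCol P A y q α τ C B v s)
      = (t - distaCenter P A y q τ C B v) ⬝ᵥ (t - distaCenter P A y q τ C B v)
          + 2 * α * onenorm t
        - ((s - distaCenter P A y q τ C B v) ⬝ᵥ (s - distaCenter P A y q τ C B v)
          + 2 * α * onenorm s) := by
  set c := distaCenter P A y q τ C B v with hc_def
  have hAdot : ∀ w, (t - s) ⬝ᵥ ((A v)ᵀ *ᵥ w) = (A v *ᵥ t - A v *ᵥ s) ⬝ᵥ w := fun w => by
    rw [dotProduct_mulVec, vecMul_transpose, mulVec_sub]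
  have hc : (t - s) ⬝ᵥ c = (1 - q) * ((t - s) ⬝ᵥ avg P C v) + q * ((t - s) ⬝ᵥ B v)
      + q * τ v * ((A v *ᵥ t - A v *ᵥ s) ⬝ᵥ (y v - A v *ᵥ B v)) := by
    simp only [hc_def, distaCenter, dotProduct_add, dotProduct_smul, smul_eq_mul, hAdot]
    ring
  have hfit : (y v - A v *ᵥ t) ⬝ᵥ (y v - A v *ᵥ t) - (y v - A v *ᵥ s) ⬝ᵥ (y v - A v *ᵥ s)
      - ((A v *ᵥ (t - B v)) ⬝ᵥ (A v *ᵥ (t - B v)) - (A v *ᵥ (s - B v)) ⬝ᵥ (A v *ᵥ (s - B v)))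
      = -2 * ((A v *ᵥ t - A v *ᵥ s) ⬝ᵥ (y v - A v *ᵥ B v)) := by
    rw [dotProduct_self_sub_comm (y v), dotProduct_self_sub_comm (y v), mulVec_sub, mulVec_sub,
      dotProduct_self_sub_sub_dotProduct_self_sub, dotProduct_self_sub_sub_dotProduct_self_sub,
      dotProduct_sub]
    ring
  have hcons := sum_mul_sq_dist_sub_sum_mul_sq_dist P hv C t s
  have hanchor := dotProduct_self_sub_sub_dotProduct_self_sub t s (B v)
  have hcen := dotProduct_self_sub_sub_dotProduct_self_sub t s c
  simp only [surrogateCol, dotProduct_one_sub_smul_transpose_mul_self_mulVec]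
  field_simp
  linear_combination τ v * q * hfit + (1 - q) * hcons + q * hanchor - hcen + 2 * hc

lemma isMinOn_surrogateCol {τ : V → ℝ} {v : V} (hv : ∑ w, P v w = 1) (hα : 0 ≤ α)
    (hτ : 0 < τ v) (C B : V → Fin n → ℝ) :
    IsMinOn (surrogateCol P A y q α τ C B v) Set.univ
      (eta α (distaCenter P A y q τ C B v)) := by
  refine isMinOn_univ_iff.mpr fun s => ?_
  have h := mul_surrogateCol_sub_surrogateCol P A y q α hv hτ.ne' C B
    (eta α (distaCenter P A y q τ C B v)) s
  have hprox := isMinOn_univ_iff.mp (isMinOn_eta hα (distaCenter P A y q τ C B v)) s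
  nlinarith

lemma Flasso_add_le_sum_surrogateCol (hsymm : ∀ v w, P v w = P w v)
    (hrow : ∀ v, ∑ w, P v w = 1) (hq : q ≤ 1) {τ : ℝ} (hτ : 0 < τ) (X T : V → Fin n → ℝ) :
    Flasso P A y q α (fun _ => τ) T
        + q / τ * ∑ v, (T v - X v) ⬝ᵥ ((1 - τ • ((A v)ᵀ * A v)) *ᵥ (T v - X v))
      ≤ ∑ v, surrogateCol P A y q α (fun _ => τ) (avg P X) X v (T v) := by
  have hcons := mul_le_mul_of_nonneg_left (sum_sum_mul_sq_dist_avg_le P hsymm hrow (avg P X) T)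
    (div_nonneg (sub_nonneg.mpr hq) hτ.le)
  simp only [Flasso, surrogateCol, enorm2_sq, mul_sum, sum_add_distrib] at hcons ⊢
  linarith

end Surrogate

theorem lasso_descent_bound_general
    {n m d : ℕ} {V : Type*} [Fintype V]
    (E : V → V → Prop) [DecidableRel E]
    (hself : ∀ v, E v v) (hsymm : ∀ u v, E u v → E v u)
    (hreg : ∀ v, (Finset.univ.filter (fun w => E v w)).card = d)
    (A : V → Matrix (Fin m) (Fin n) ℝ) (y : V → Fin m → ℝ)
    (q α : ℝ) (hq0 : 0 < q) (hq1 : q < 1) (hα : 0 < α)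
    (τ : ℝ) (hτpos : 0 < τ)
    (hτ : ∀ v, τ < (opNorm (A v) ^ 2)⁻¹) :
    (∀ X : V → Fin n → ℝ,
        (q / τ) * ∑ v, dotProduct
            (Gamma (Pmat E d) A y q α (fun _ => τ) X v - X v)
            (((1 : Matrix (Fin n) (Fin n) ℝ) - τ • ((A v)ᵀ * A v)).mulVec
              (Gamma (Pmat E d) A y q α (fun _ => τ) X v - X v))
          ≤ Flasso (Pmat E d) A y q α (fun _ => τ) X
            - Flasso (Pmat E d) A y q α (fun _ => τ)
                (Gamma (Pmat E d) A y q α (fun _ => τ) X))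
      ∧ (∀ v : V, ((1 : Matrix (Fin n) (Fin n) ℝ) - τ • ((A v)ᵀ * A v)).PosDef)
      ∧ ∀ X : V → Fin n → ℝ,
          0 ≤ (q / τ) * ∑ v, dotProduct
            (Gamma (Pmat E d) A y q α (fun _ => τ) X v - X v)
            (((1 : Matrix (Fin n) (Fin n) ℝ) - τ • ((A v)ᵀ * A v)).mulVec
              (Gamma (Pmat E d) A y q α (fun _ => τ) X v - X v)) := by
  set P := Pmat E d
  have hrow : ∀ v, ∑ w, P v w = 1 := sum_Pmat E d hself hreg
  have hposDef : ∀ v, (1 - τ • ((A v)ᵀ * A v)).PosDef := fun v =>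
    posDef_one_sub_smul_transpose_mul_self (A v) hτpos (hτ v)
  refine ⟨fun X => ?_, hposDef, fun X => ?_⟩
  · set T := Gamma P A y q α (fun _ => τ) X
    have hT : ∀ v, T v = eta α (distaCenter P A y q (fun _ => τ) (avg P X) X v) :=
      Gamma_apply_eq_eta_distaCenter P A y q α _ X
    have hdescent := calc
      Flasso P A y q α (fun _ => τ) T
          + q / τ * ∑ v, (T v - X v) ⬝ᵥ ((1 - τ • ((A v)ᵀ * A v)) *ᵥ (T v - X v))
        ≤ ∑ v, surrogateCol P A y q α (fun _ => τ) (avg P X) X v (T v) :=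
          Flasso_add_le_sum_surrogateCol P A y q α (Pmat_comm E d hsymm) hrow hq1.le hτpos X T
      _ ≤ ∑ v, surrogateCol P A y q α (fun _ => τ) (avg P X) X v (X v) :=
          sum_le_sum fun v _ => by
            rw [hT]
            exact isMinOn_univ_iff.mp
              (isMinOn_surrogateCol P A y q α (hrow v) hα.le hτpos (avg P X) X) (X v)
      _ = Flasso P A y q α (fun _ => τ) X := (Flasso_eq_sum_surrogateCol P A y q α _ X).symm
    linarith
  · exact mul_nonneg (div_nonneg hq0.le hτpos.le) <| sum_nonneg fun v _ => by
      simpa using (hposDef v).posSemidef.dotProduct_mulVec_nonneg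
        (Gamma P A y q α (fun _ => τ) X v - X v)

/-- Quantified descent. With uniform stepsizes `τ < ‖A_v‖₂⁻²` for every `v`,
for every `X`,
`F(X) − F(ΓX) ≥ (q/τ) ∑_v ((ΓX)_v − x_v)ᵀ (I − τ A_vᵀA_v) ((ΓX)_v − x_v)`,
each matrix `I − τ A_vᵀA_v` is positive definite, and the right-hand side is nonnegative. -/
theorem lasso_descent_bound
    {n m d : ℕ} {V : Type*} [Fintype V] [DecidableEq V] [Nonempty V]
    (E : V → V → Prop) [DecidableRel E]
    (hself : ∀ v, E v v) (hsymm : ∀ u v, E u v → E v u)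
    (hreg : ∀ v, (Finset.univ.filter (fun w => E v w)).card = d)
    (A : V → Matrix (Fin m) (Fin n) ℝ) (y : V → Fin m → ℝ)
    (q α : ℝ) (hq0 : 0 < q) (hq1 : q < 1) (hα : 0 < α)
    (τ : ℝ) (hτpos : 0 < τ)
    (hτ : ∀ v, τ < (opNorm (A v) ^ 2)⁻¹) :
    (∀ X : V → Fin n → ℝ,
        (q / τ) * ∑ v, dotProduct
            (Gamma (Pmat E d) A y q α (fun _ => τ) X v - X v)
            (((1 : Matrix (Fin n) (Fin n) ℝ) - τ • ((A v)ᵀ * A v)).mulVec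
              (Gamma (Pmat E d) A y q α (fun _ => τ) X v - X v))
          ≤ Flasso (Pmat E d) A y q α (fun _ => τ) X
            - Flasso (Pmat E d) A y q α (fun _ => τ)
                (Gamma (Pmat E d) A y q α (fun _ => τ) X))
      ∧ (∀ v : V, ((1 : Matrix (Fin n) (Fin n) ℝ) - τ • ((A v)ᵀ * A v)).PosDef)
      ∧ ∀ X : V → Fin n → ℝ,
          0 ≤ (q / τ) * ∑ v, dotProduct
            (Gamma (Pmat E d) A y q α (fun _ => τ) X v - X v)
            (((1 : Matrix (Fin n) (Fin n) ℝ) - τ • ((A v)ᵀ * A v)).mulVec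
              (Gamma (Pmat E d) A y q α (fun _ => τ) X v - X v)) :=
  lasso_descent_bound_general E hself hsymm hreg A y q α hq0 hq1 hα τ hτpos hτ
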